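/- Let f : ℝⁿ → ℝ be C³ with ∇²f L-Lipschitz on B(x⁰, Δ̄), and let β > 0 be such that the nested-set Hessian ∇²_s f(x⁰; β·Id_n, β·Id_n) (i.e., S = T = β Id_n) is well-defined with all evaluation points in B(x⁰, Δ̄). Then ‖∇²_s f(x⁰; β Id, β Id) − ∇²f(x⁰)‖ ≤ (5/3) n^{3/2} L β. -/

import Mathlib

open Matrix Metric

/-- The induced 2-norm (operator norm) of a matrix. -/
noncomputable def opNorm {m n : ℕ} (A : Matrix (Fin m) (Fin n) ℝ) : ℝ :=
  ‖LinearMap.toContinuousLinearMap (Matrix.toEuclideanLin A)‖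

/-- The Hessian matrix of f at x. -/
noncomputable def hess {n : ℕ} (f : EuclideanSpace ℝ (Fin n) → ℝ)
    (x : EuclideanSpace ℝ (Fin n)) : Matrix (Fin n) (Fin n) ℝ :=
  Matrix.of fun i j =>
    iteratedFDeriv ℝ 2 f x ![EuclideanSpace.single i 1, EuclideanSpace.single j 1]

/-- The generalized simplex gradient ∇_s f(y;T) = (Tᵀ)† δ_f(y;T); since T has
full row rank, (Tᵀ)† = (T Tᵀ)⁻¹ T. -/
noncomputable def simplexGrad {n k : ℕ} (f : EuclideanSpace ℝ (Fin n) → ℝ)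
    (t : Fin k → EuclideanSpace ℝ (Fin n)) (T : Matrix (Fin n) (Fin k) ℝ)
    (y : EuclideanSpace ℝ (Fin n)) : Fin n → ℝ :=
  ((T * Tᵀ)⁻¹ * T).mulVec fun j => f (y + t j) - f y

/-- The nested-set Hessian ∇²_s f(x⁰;S,T) = (Sᵀ)† δ_{∇_s f}(x⁰;S,T); since S
has full row rank, (Sᵀ)† = (S Sᵀ)⁻¹ S.  The i-th row of δ_{∇_s f} is
(∇_s f(x⁰+sⁱ;T) − ∇_s f(x⁰;T))ᵀ. -/
noncomputable def nestedSetHessian {n m k : ℕ} (f : EuclideanSpace ℝ (Fin n) → ℝ)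
    (s : Fin m → EuclideanSpace ℝ (Fin n)) (S : Matrix (Fin n) (Fin m) ℝ)
    (t : Fin k → EuclideanSpace ℝ (Fin n)) (T : Matrix (Fin n) (Fin k) ℝ)
    (x0 : EuclideanSpace ℝ (Fin n)) : Matrix (Fin n) (Fin n) ℝ :=
  ((S * Sᵀ)⁻¹ * S) *
    Matrix.of fun i j => simplexGrad f t T (x0 + s i) j - simplexGrad f t T x0 j

/-! With `S = T = β • 1` both pseudo-inverses are `β⁻¹ • 1`, so entry `(i, j)` of the nested-set
Hessian is `β⁻²` times the second difference
`f (x⁰ + β eᵢ + β eⱼ) - f (x⁰ + β eᵢ) - f (x⁰ + β eⱼ) + f x⁰`.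
Two applications of the mean value inequality with derivative bounds affine in the parameter
(first along `eᵢ` to `t ↦ ∂ⱼ f`, then along `eⱼ`) show that this second difference is within
`L β³` of `β² ∂ᵢ∂ⱼ f (x⁰)`, because each Hessian entry is `L`-Lipschitz. Every entry of the error
matrix is then at most `L β`, so its operator norm is at most `n L β ≤ (5/3) n^{3/2} L β`. -/

section SecondDifference

open Set

theorem norm_sub_le_of_norm_deriv_le_affine {E : Type*} [NormedAddCommGroup E] [NormedSpace ℝ E]
    {g g' : ℝ → E} {c d : ℝ} (hg : ∀ s ∈ Icc (0 : ℝ) 1, HasDerivAt g (g' s) s)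
    (bound : ∀ s ∈ Ico (0 : ℝ) 1, ‖g' s‖ ≤ c * s + d) :
    ‖g 1 - g 0‖ ≤ c / 2 + d := by
  have hB : ∀ s, HasDerivAt (fun s : ℝ => c / 2 * s ^ 2 + d * s) (c * s + d) s := fun s =>
    (((hasDerivAt_pow 2 s).const_mul (c / 2)).add ((hasDerivAt_id' s).const_mul d)).congr_deriv
      (by ring)
  have := image_norm_le_of_norm_deriv_right_le_deriv_boundary (f := fun s => g s - g 0)
    (fun s hs => ((hg s hs).continuousAt.sub continuousAt_const).continuousWithinAt)
    (fun s hs => ((hg s (Ico_subset_Icc_self hs)).sub_const (g 0)).hasDerivWithinAt)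
    (by simp) hB bound (right_mem_Icc.2 zero_le_one)
  simpa using this

theorem Convex.add_smul_add_smul_mem {E : Type*} [AddCommGroup E] [Module ℝ E] {U : Set E}
    (hU : Convex ℝ U) {x a b : E} (hx : x ∈ U) (ha : x + a ∈ U) (hb : x + b ∈ U)
    (hab : x + a + b ∈ U) {s t : ℝ} (hs : s ∈ Icc (0 : ℝ) 1) (ht : t ∈ Icc (0 : ℝ) 1) :
    x + s • a + t • b ∈ U := by
  have hsa : x + s • a ∈ U := hU.add_smul_mem hx ha hs
  have hsab : x + s • a + b ∈ U := by
    rw [add_right_comm]; exact hU.add_smul_mem hb (by rwa [add_right_comm]) hs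
  exact hU.add_smul_mem hsa hsab ht

theorem HasFDerivAt.hasDerivAt_add_smul {E F : Type*} [NormedAddCommGroup E] [NormedSpace ℝ E]
    [NormedAddCommGroup F] [NormedSpace ℝ F] {f : E → F} {f' : E →L[ℝ] F} {x v : E} {t : ℝ}
    (hf : HasFDerivAt f f' (x + t • v)) : HasDerivAt (fun s : ℝ => f (x + s • v)) (f' v) t := by
  have hline : HasDerivAt (fun s : ℝ => x + s • v) v t := by
    simpa using ((hasDerivAt_id t).smul_const v).const_add x
  exact hf.comp_hasDerivAt t hline

variable {E F : Type*} [NormedAddCommGroup E] [NormedSpace ℝ E] [NormedAddCommGroup F]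
  [NormedSpace ℝ F]

def secondDifference (f : E → F) (x a b : E) : F := f (x + a + b) - f (x + a) - f (x + b) + f x

theorem norm_secondDifference_sub_le {f : E → F} {U : Set E} (hUo : IsOpen U) (hUc : Convex ℝ U)
    (hf : DifferentiableOn ℝ f U) (hf' : DifferentiableOn ℝ (fderiv ℝ f) U) {x a b : E}
    (hx : x ∈ U) (ha : x + a ∈ U) (hb : x + b ∈ U) (hab : x + a + b ∈ U) {K : ℝ} (hK : 0 ≤ K)
    (hLip : ∀ y ∈ U, ‖fderiv ℝ (fderiv ℝ f) y a b - fderiv ℝ (fderiv ℝ f) x a b‖ ≤ K * ‖y - x‖) :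
    ‖secondDifference f x a b - fderiv ℝ (fderiv ℝ f) x a b‖ ≤ K * (‖a‖ + ‖b‖) / 2 := by
  set H := fderiv ℝ (fderiv ℝ f) x a b
  have hmem : ∀ s ∈ Icc (0 : ℝ) 1, ∀ t ∈ Icc (0 : ℝ) 1, x + t • b + s • a ∈ U := fun s hs t ht =>
    hUc.add_smul_add_smul_mem hx hb ha (by rwa [add_right_comm]) ht hs
  have hmem_a : ∀ t ∈ Icc (0 : ℝ) 1, x + a + t • b ∈ U := fun t ht => by
    simpa [add_right_comm] using hmem 1 (right_mem_Icc.2 zero_le_one) t ht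
  have hmem_0 : ∀ t ∈ Icc (0 : ℝ) 1, x + t • b ∈ U := fun t ht => by
    simpa using hmem 0 (left_mem_Icc.2 zero_le_one) t ht
  -- Differentiating `fderiv ℝ f · b` along `a` produces `D²f · a b` in the order of `H`,
  -- so no symmetry of the second derivative is needed.
  have inner_bound : ∀ t ∈ Icc (0 : ℝ) 1,
      ‖fderiv ℝ f (x + a + t • b) b - fderiv ℝ f (x + t • b) b - H‖ ≤ K * ‖b‖ * t + K * ‖a‖ / 2 := by
    intro t ht
    have hψ : ∀ s ∈ Icc (0 : ℝ) 1, HasDerivAt (fun s : ℝ => fderiv ℝ f (x + t • b + s • a) b - s • H)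
        (fderiv ℝ (fderiv ℝ f) (x + t • b + s • a) a b - H) s := by
      intro s hs
      have hD : HasDerivAt (fun s : ℝ => fderiv ℝ f (x + t • b + s • a) b)
          (fderiv ℝ (fderiv ℝ f) (x + t • b + s • a) a b) s := by
        simpa using (hf'.differentiableAt (hUo.mem_nhds (hmem s hs t ht))).hasFDerivAt
          |>.hasDerivAt_add_smul |>.clm_apply (hasDerivAt_const s b)
      exact (hD.sub ((hasDerivAt_id' s).smul_const H)).congr_deriv (by rw [one_smul])
    have hψ' : ∀ s ∈ Ico (0 : ℝ) 1,
        ‖fderiv ℝ (fderiv ℝ f) (x + t • b + s • a) a b - H‖ ≤ K * ‖a‖ * s + K * ‖b‖ * t := by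
      intro s hs
      calc _ ≤ K * ‖t • b + s • a‖ := by
            simpa [add_assoc] using hLip _ (hmem s (Ico_subset_Icc_self hs) t ht)
        _ ≤ K * (t * ‖b‖ + s * ‖a‖) := by
            gcongr
            refine (norm_add_le _ _).trans_eq ?_
            rw [norm_smul_of_nonneg ht.1, norm_smul_of_nonneg hs.1]
        _ = K * ‖a‖ * s + K * ‖b‖ * t := by ring
    have := norm_sub_le_of_norm_deriv_le_affine hψ hψ'
    simp only [one_smul, zero_smul, add_zero, sub_zero] at this
    rw [add_right_comm, sub_right_comm] at this
    linarith
  have hΦ : ∀ t ∈ Icc (0 : ℝ) 1, HasDerivAt (fun t : ℝ => f (x + a + t • b) - f (x + t • b) - t • H)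
      (fderiv ℝ f (x + a + t • b) b - fderiv ℝ f (x + t • b) b - H) t := by
    intro t ht
    have h1 := (hf.differentiableAt (hUo.mem_nhds (hmem_a t ht))).hasFDerivAt.hasDerivAt_add_smul
    have h0 := (hf.differentiableAt (hUo.mem_nhds (hmem_0 t ht))).hasFDerivAt.hasDerivAt_add_smul
    exact ((h1.sub h0).sub ((hasDerivAt_id' t).smul_const H)).congr_deriv (by rw [one_smul])
  have := norm_sub_le_of_norm_deriv_le_affine hΦ fun t ht => inner_bound t (Ico_subset_Icc_self ht)
  simp only [one_smul, zero_smul, add_zero, sub_zero] at this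
  calc _ = _ := by unfold secondDifference; congr 1; abel
    _ ≤ _ := this
    _ = _ := by ring

end SecondDifference

theorem EuclideanSpace.norm_le_sqrt_card_mul {𝕜 ι : Type*} [RCLike 𝕜] [Fintype ι]
    {x : EuclideanSpace 𝕜 ι} {r : ℝ} (hr : 0 ≤ r) (h : ∀ i, ‖x i‖ ≤ r) :
    ‖x‖ ≤ √(Fintype.card ι) * r := by
  rw [EuclideanSpace.norm_eq, ← Real.sqrt_sq hr, ← Real.sqrt_mul (Nat.cast_nonneg _)]
  gcongr
  calc ∑ i, ‖x i‖ ^ 2 ≤ ∑ _i : ι, r ^ 2 := Finset.sum_le_sum fun i _ => by gcongr; exact h i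
    _ = _ := by simp

theorem abs_apply_le_opNorm {m n : ℕ} (A : Matrix (Fin m) (Fin n) ℝ) (i : Fin m) (j : Fin n) :
    |A i j| ≤ opNorm A := by
  have hcol : toEuclideanLin A (EuclideanSpace.single j 1) i = A i j := by
    simp [Matrix.mulVec_single]
  calc |A i j| = ‖toEuclideanLin A (EuclideanSpace.single j 1) i‖ := by rw [hcol, Real.norm_eq_abs]
    _ ≤ ‖LinearMap.toContinuousLinearMap (toEuclideanLin A) (EuclideanSpace.single j 1)‖ :=
      PiLp.norm_apply_le _ i
    _ ≤ opNorm A * ‖EuclideanSpace.single j (1 : ℝ)‖ := ContinuousLinearMap.le_opNorm _ _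
    _ = opNorm A := by simp

theorem opNorm_le_sqrt_mul_of_abs_le {m n : ℕ} (A : Matrix (Fin m) (Fin n) ℝ) {c : ℝ} (hc : 0 ≤ c)
    (h : ∀ i j, |A i j| ≤ c) : opNorm A ≤ √(m * n) * c := by
  refine ContinuousLinearMap.opNorm_le_bound _ (by positivity) fun x => ?_
  have hrow : ∀ i, ‖toEuclideanLin A x i‖ ≤ √n * c * ‖x‖ := by
    intro i
    have hAx : toEuclideanLin A x i = inner ℝ (WithLp.toLp 2 (A i)) x := by
      simp [EuclideanSpace.inner_eq_star_dotProduct, Matrix.mulVec, dotProduct, mul_comm]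
    have hAi : ‖WithLp.toLp 2 (A i)‖ ≤ √n * c := by
      simpa using EuclideanSpace.norm_le_sqrt_card_mul hc fun j => h i j
    rw [hAx, Real.norm_eq_abs]
    exact (abs_real_inner_le_norm _ _).trans (by gcongr)
  calc ‖toEuclideanLin A x‖ ≤ √m * (√n * c * ‖x‖) := by
        simpa using EuclideanSpace.norm_le_sqrt_card_mul (by positivity) hrow
    _ = √(m * n) * c * ‖x‖ := by rw [Real.sqrt_mul (Nat.cast_nonneg _)]; ring

theorem hess_apply {n : ℕ} (f : EuclideanSpace ℝ (Fin n) → ℝ) (x : EuclideanSpace ℝ (Fin n))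
    (i j : Fin n) :
    hess f x i j =
      fderiv ℝ (fderiv ℝ f) x (EuclideanSpace.single i 1) (EuclideanSpace.single j 1) := by
  simp [hess, iteratedFDeriv_two_apply]

theorem inv_mul_transpose_mul_smul_one {ι K : Type*} [Fintype ι] [DecidableEq ι] [Field K]
    {c : K} (hc : c ≠ 0) :
    ((c • (1 : Matrix ι ι K)) * (c • (1 : Matrix ι ι K))ᵀ)⁻¹ * (c • 1) = c⁻¹ • 1 := by
  have : (c • (1 : Matrix ι ι K)) * (c • (1 : Matrix ι ι K))ᵀ = (c * c) • 1 := by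
    simp [smul_smul]
  rw [this, Matrix.inv_eq_right_inv (B := (c * c)⁻¹ • 1)
    (by rw [smul_mul_smul_comm, one_mul, mul_inv_cancel₀ (mul_ne_zero hc hc), one_smul])]
  simp [smul_smul, hc]

theorem simplexGrad_smul_one {n : ℕ} (f : EuclideanSpace ℝ (Fin n) → ℝ)
    (t : Fin n → EuclideanSpace ℝ (Fin n)) {c : ℝ} (hc : c ≠ 0) (y : EuclideanSpace ℝ (Fin n)) :
    simplexGrad f t (c • 1) y = c⁻¹ • fun j => f (y + t j) - f y := by
  rw [simplexGrad, inv_mul_transpose_mul_smul_one hc, smul_mulVec, one_mulVec]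

theorem nestedSetHessian_smul_one_apply {n : ℕ} (f : EuclideanSpace ℝ (Fin n) → ℝ)
    (s t : Fin n → EuclideanSpace ℝ (Fin n)) {c d : ℝ} (hc : c ≠ 0) (hd : d ≠ 0)
    (x : EuclideanSpace ℝ (Fin n)) (i j : Fin n) :
    nestedSetHessian f s (c • 1) t (d • 1) x i j = (c * d)⁻¹ * secondDifference f x (s i) (t j) := by
  rw [nestedSetHessian, inv_mul_transpose_mul_smul_one hc]
  simp only [simplexGrad_smul_one f t hd, Pi.smul_apply, smul_eq_mul, smul_mul_assoc, one_mul,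
    Matrix.smul_apply, of_apply, _root_.mul_inv_rev, secondDifference]
  ring

theorem abs_nestedSetHessian_sub_hess_apply_le {n : ℕ} {f : EuclideanSpace ℝ (Fin n) → ℝ}
    {x0 : EuclideanSpace ℝ (Fin n)} {Δbar L β : ℝ} (hβ : 0 < β) (hL : 0 ≤ L)
    (hf : ContDiffOn ℝ 2 f (ball x0 Δbar))
    (hLip : ∀ y ∈ ball x0 Δbar, opNorm (hess f y - hess f x0) ≤ L * ‖y - x0‖) (i j : Fin n)
    (hx0 : x0 ∈ ball x0 Δbar) (hi : x0 + β • EuclideanSpace.single i 1 ∈ ball x0 Δbar)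
    (hj : x0 + β • EuclideanSpace.single j 1 ∈ ball x0 Δbar)
    (hij : x0 + β • EuclideanSpace.single i 1 + β • EuclideanSpace.single j 1 ∈ ball x0 Δbar) :
    |(nestedSetHessian f (fun i => β • EuclideanSpace.single i 1) (β • 1)
        (fun j => β • EuclideanSpace.single j 1) (β • 1) x0 - hess f x0) i j| ≤ L * β := by
  have hD2 : ∀ y, fderiv ℝ (fderiv ℝ f) y (β • EuclideanSpace.single i 1)
      (β • EuclideanSpace.single j 1) = β ^ 2 * hess f y i j := fun y => by
    simp only [map_smul, _root_.smul_apply, smul_eq_mul, hess_apply]; ring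
  have hK : ∀ y ∈ ball x0 Δbar, ‖fderiv ℝ (fderiv ℝ f) y (β • EuclideanSpace.single i 1)
      (β • EuclideanSpace.single j 1) - fderiv ℝ (fderiv ℝ f) x0 (β • EuclideanSpace.single i 1)
      (β • EuclideanSpace.single j 1)‖ ≤ L * β ^ 2 * ‖y - x0‖ := fun y hy => by
    rw [hD2, hD2, ← mul_sub, ← Matrix.sub_apply, norm_mul, Real.norm_eq_abs, Real.norm_eq_abs,
      abs_of_pos (by positivity)]
    calc β ^ 2 * |(hess f y - hess f x0) i j| ≤ β ^ 2 * (L * ‖y - x0‖) := by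
          gcongr; exact (abs_apply_le_opNorm _ i j).trans (hLip y hy)
      _ = _ := by ring
  have hSD := norm_secondDifference_sub_le isOpen_ball (convex_ball x0 Δbar)
    (hf.differentiableOn (by norm_num))
    ((hf.fderiv_of_isOpen isOpen_ball (m := 1) (by norm_num)).differentiableOn one_ne_zero)
    hx0 hi hj hij (by positivity) hK
  rw [hD2, Real.norm_eq_abs] at hSD
  simp only [norm_smul, PiLp.norm_single, norm_one, Real.norm_eq_abs, abs_of_pos hβ] at hSD
  rw [Matrix.sub_apply, nestedSetHessian_smul_one_apply f _ _ hβ.ne' hβ.ne']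
  set D := secondDifference f x0 (β • EuclideanSpace.single i 1) (β • EuclideanSpace.single j 1)
  calc |(β * β)⁻¹ * D - hess f x0 i j| = (β ^ 2)⁻¹ * |D - β ^ 2 * hess f x0 i j| := by
        rw [← abs_of_pos (inv_pos.2 (pow_pos hβ 2)), ← abs_mul]; congr 1; field_simp
    _ ≤ (β ^ 2)⁻¹ * (L * β ^ 2 * (β * 1 + β * 1) / 2) := by gcongr
    _ = L * β := by field_simp; ring

/-- with S = T = β·Id, the nested-set Hessian satisfies
‖∇²_s f(x⁰;β Id, β Id) − ∇²f(x⁰)‖ ≤ (5/3) n^{3/2} L β. -/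
theorem nested_set_hessian_error_bound_beta_id {n : ℕ}
    (f : EuclideanSpace ℝ (Fin n) → ℝ) (x0 : EuclideanSpace ℝ (Fin n))
    (Δbar L β : ℝ) (hβ : 0 < β)
    (hf : ContDiffOn ℝ 3 f (ball x0 Δbar))
    (hLip : ∀ y ∈ ball x0 Δbar, ∀ z ∈ ball x0 Δbar,
      opNorm (hess f y - hess f z) ≤ L * ‖y - z‖)
    (hpts1 : ∀ i : Fin n, x0 + β • EuclideanSpace.single i 1 ∈ ball x0 Δbar)
    (hpts2 : ∀ i j : Fin n,
      x0 + β • EuclideanSpace.single i 1 + β • EuclideanSpace.single j 1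
        ∈ ball x0 Δbar) :
    opNorm (nestedSetHessian f
        (fun i => β • EuclideanSpace.single i 1) (β • (1 : Matrix (Fin n) (Fin n) ℝ))
        (fun j => β • EuclideanSpace.single j 1) (β • (1 : Matrix (Fin n) (Fin n) ℝ))
        x0 - hess f x0)
      ≤ 5 / 3 * ((n : ℝ) * Real.sqrt n) * L * β := by
  obtain rfl | hn := n.eq_zero_or_pos
  · simp [opNorm]
  have hx0 : x0 ∈ ball x0 Δbar := mem_ball_self (nonempty_ball.1 ⟨_, hpts1 ⟨0, hn⟩⟩)
  have hL : 0 ≤ L := by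
    have := (norm_nonneg _).trans (hLip _ (hpts1 ⟨0, hn⟩) _ hx0)
    simpa [norm_smul, PiLp.norm_single, abs_of_pos hβ, hβ] using this
  have h1n : 1 ≤ √(n : ℝ) := Real.one_le_sqrt.2 (by exact_mod_cast hn)
  calc _ ≤ √(n * n) * (L * β) := opNorm_le_sqrt_mul_of_abs_le _ (by positivity) fun i j =>
        abs_nestedSetHessian_sub_hess_apply_le hβ hL (hf.of_le (by norm_num))
          (fun y hy => hLip y hy x0 hx0) i j hx0 (hpts1 i) (hpts1 j) (hpts2 i j)
    _ = n * (L * β) * 1 := by rw [Real.sqrt_mul_self (Nat.cast_nonneg n), mul_one]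
    _ ≤ n * (L * β) * (5 / 3 * √n) := by gcongr; linarith
    _ = 5 / 3 * ((n : ℝ) * Real.sqrt n) * L * β := by ring
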